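/- arXiv:2205.13905 — 4 statements merged into one kernel-verified Lean document; each statement's English description precedes it below -/
import Mathlib

section
/- For all n ≥ r ≥ 1 and k ≥ r, the Turán numbers satisfy T(n,k,r) ≥ (n/(n−r)) · T(n−1,k,r). -/
noncomputable def turanNumber (n k r : ℕ) : ℕ :=
  sInf {m : ℕ | ∃ S : Finset (Finset (Fin n)),
    (∀ s ∈ S, s.card = r) ∧
    (∀ Y : Finset (Fin n), Y.card = k → ∃ s ∈ S, s ⊆ Y) ∧
    S.card = m}

/-!
Take a minimum Turán family `S` on `n + 1` points. For each point `x`, the members of `S` avoiding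
`x` form a Turán family on the remaining `n` points, so there are at least `T(n, k, r)` of them.
Summing over `x` counts every member of `S` exactly `n + 1 - r` times, whence
`(n + 1) T(n, k, r) ≤ (n + 1 - r) T(n + 1, k, r)`.
-/

open Finset

variable {α β : Type*}

def IsTuranFamily (k r : ℕ) (S : Finset (Finset α)) : Prop :=
  (∀ s ∈ S, #s = r) ∧ ∀ Y : Finset α, #Y = k → ∃ s ∈ S, s ⊆ Y

lemma isTuranFamily_powersetCard [Fintype α] {k r : ℕ} (hrk : r ≤ k) :
    IsTuranFamily k r (powersetCard r (univ : Finset α)) := by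
  refine ⟨fun s hs ↦ mem_powersetCard_univ.1 hs, fun Y hY ↦ ?_⟩
  obtain ⟨s, hsY, hs⟩ := exists_subset_card_eq (s := Y) (hY ▸ hrk)
  exact ⟨s, mem_powersetCard_univ.2 hs, hsY⟩

lemma IsTuranFamily.preimage_map {k r : ℕ} {S : Finset (Finset α)} (hS : IsTuranFamily k r S)
    (f : β ↪ α) : IsTuranFamily k r (S.preimage (map f) (map_injective f).injOn) := by
  refine ⟨fun t ht ↦ ?_, fun Y hY ↦ ?_⟩
  · rw [← card_map f]; exact hS.1 _ (mem_preimage.1 ht)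
  · obtain ⟨s, hs, hsY⟩ := hS.2 (Y.map f) (by rwa [card_map])
    obtain ⟨t, htY, rfl⟩ := subset_map_iff.1 hsY
    exact ⟨t, mem_preimage.2 hs, htY⟩

lemma turanNumber_le_card {n k r : ℕ} {S : Finset (Finset (Fin n))} (hS : IsTuranFamily k r S) :
    turanNumber n k r ≤ #S :=
  Nat.sInf_le ⟨S, hS.1, hS.2, rfl⟩

lemma exists_isTuranFamily_card_eq_turanNumber {n k r : ℕ} (hrk : r ≤ k) :
    ∃ S : Finset (Finset (Fin n)), IsTuranFamily k r S ∧ #S = turanNumber n k r := by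
  have hne := isTuranFamily_powersetCard (α := Fin n) hrk
  obtain ⟨S, hS, hcov, hcard⟩ := Nat.sInf_mem (s := {m | ∃ S : Finset (Finset (Fin n)),
    (∀ s ∈ S, #s = r) ∧ (∀ Y : Finset (Fin n), #Y = k → ∃ s ∈ S, s ⊆ Y) ∧ #S = m})
    ⟨_, _, hne.1, hne.2, rfl⟩
  exact ⟨S, ⟨hS, hcov⟩, hcard⟩

lemma mem_range_map_succAboveEmb_iff {n : ℕ} (x : Fin (n + 1)) (s : Finset (Fin (n + 1))) :
    s ∈ Set.range (map x.succAboveEmb) ↔ x ∉ s := by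
  have : s ∈ Set.range (map x.succAboveEmb) ↔ s ⊆ univ.map x.succAboveEmb := by
    simp [subset_map_iff, eq_comm]
  rw [this, ← coe_subset, coe_map, coe_univ, Set.image_univ, Fin.coe_succAboveEmb,
    Fin.range_succAbove, Set.subset_compl_singleton_iff, mem_coe]

lemma turanNumber_le_card_filter_notMem {n k r : ℕ} {S : Finset (Finset (Fin (n + 1)))}
    (hS : IsTuranFamily k r S) (x : Fin (n + 1)) :
    turanNumber n k r ≤ #{s ∈ S | x ∉ s} := by
  classical
  calc turanNumber n k r ≤ #(S.preimage (map x.succAboveEmb) (map_injective _).injOn) :=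
        turanNumber_le_card (hS.preimage_map _)
    _ = #{s ∈ S | x ∉ s} := by
        rw [card_preimage]; simp_rw [mem_range_map_succAboveEmb_iff]

lemma sum_card_filter_notMem [Fintype α] [DecidableEq α] (S : Finset (Finset α)) :
    ∑ x, #{s ∈ S | x ∉ s} = ∑ s ∈ S, #sᶜ := by
  simp_rw [card_filter]
  rw [sum_comm]
  simp_rw [← card_filter]
  exact sum_congr rfl fun s _ ↦ congrArg card (by ext; simp)

lemma succ_mul_turanNumber_le {n k r : ℕ} (hrk : r ≤ k) :
    (n + 1) * turanNumber n k r ≤ (n + 1 - r) * turanNumber (n + 1) k r := by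
  classical
  obtain ⟨S, hS, hcard⟩ := exists_isTuranFamily_card_eq_turanNumber (n := n + 1) hrk
  calc (n + 1) * turanNumber n k r = ∑ _x : Fin (n + 1), turanNumber n k r := by simp
    _ ≤ ∑ x, #{s ∈ S | x ∉ s} := sum_le_sum fun x _ ↦ turanNumber_le_card_filter_notMem hS x
    _ = ∑ s ∈ S, #sᶜ := sum_card_filter_notMem S
    _ = (n + 1 - r) * turanNumber (n + 1) k r := by
        rw [sum_congr rfl fun s hs ↦ by rw [card_compl, hS.1 s hs], sum_const, hcard]
        simp [mul_comm]

theorem stmt_4_general (n k r : ℕ) (hrn : r < n) (hrk : r ≤ k) :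
    ((n : ℚ) / ((n : ℚ) - (r : ℚ))) * (turanNumber (n - 1) k r : ℚ) ≤
      (turanNumber n k r : ℚ) := by
  obtain ⟨m, rfl⟩ : ∃ m, n = m + 1 := ⟨n - 1, by omega⟩
  have hpos : (0 : ℚ) < (m + 1 : ℕ) - (r : ℚ) := sub_pos.2 (mod_cast hrn)
  have hmul := Nat.cast_le (α := ℚ).2 (succ_mul_turanNumber_le (n := m) hrk)
  push_cast [Nat.cast_sub hrn.le] at hmul hpos ⊢
  rw [div_mul_eq_mul_div, div_le_iff₀ hpos]
  linarith

/-- Katona's inequality `T(n,k,r) ≥ (n/(n−r)) · T(n−1,k,r)`. -/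
theorem stmt_4 (n k r : ℕ) (hr : 1 ≤ r) (hrn : r < n) (hrk : r ≤ k)
    (hk : k ≤ n - 1) :
    ((n : ℚ) / ((n : ℚ) - (r : ℚ))) * (turanNumber (n - 1) k r : ℚ) ≤
      (turanNumber n k r : ℚ) :=
  stmt_4_general n k r hrn hrk
end

section
/- For every odd n and every even integer d with 0 ≤ d ≤ n−1 and d ≠ (n−1)/2, there exists a d-regular graph on n vertices that contains no induced 5-cycle. -/
/-!
The pentagon is connected and self-complementary (`i ↦ 2 * i`), so graphs without an induced
`C₅` are closed under disjoint union and complementation; complete multipartite graphs (where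
non-adjacency is transitive) and bipartite graphs have none.

For even `d` and odd `n ≥ 2d + 3` we induct on `d`. If `n ≥ 3d + 1`, take `K_{d+1}` together with
a `d`-regular bipartite circulant on the remaining `n - d - 1 ≥ 2d` vertices. Otherwise take the
cocktail party graph on `d + 2` vertices together with the complement of an `(n - 2d - 3)`-regular
graph on `n - d - 2` vertices, which exists by induction. When `d > (n - 1) / 2`, complement an
`(n - 1 - d)`-regular example.
-/

def HasInducedC5 {V : Type*} (G : SimpleGraph V) : Prop :=
  ∃ f : Fin 5 ↪ V, ∀ i j, G.Adj (f i) (f j) ↔ (SimpleGraph.cycleGraph 5).Adj i j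

noncomputable def deg {V : Type*} (G : SimpleGraph V) (v : V) : ℕ :=
  Nat.card (G.neighborSet v)

open SimpleGraph

namespace SimpleGraph

variable {U V W : Type*} {F : SimpleGraph U} {G : SimpleGraph V} {H : SimpleGraph W}

lemma Reachable.isLeft_eq_of_sum {u v : V ⊕ W} (h : (G ⊕g H).Reachable u v) :
    u.isLeft = v.isLeft := by
  rcases u with a | b <;> rcases v with a' | b'
  · rfl
  · exact absurd h (not_reachable_sum_inl_inr a b')
  · exact absurd h.symm (not_reachable_sum_inl_inr a' b)
  · rfl

lemma Embedding.isIndContained_of_forall_isLeft (f : F ↪g G ⊕g H)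
    (hf : ∀ u, (f u).isLeft) : F ⊴ G := by
  choose g hg using fun u => Sum.isLeft_iff.mp (hf u)
  refine ⟨⟨⟨g, fun u u' h => f.injective <| show f u = f u' by rw [hg, hg, h]⟩,
    fun {u u'} => ?_⟩⟩
  show G.Adj (g u) (g u') ↔ F.Adj u u'
  rw [← sum_adj_inl (H := H), ← hg, ← hg, f.map_adj_iff]

lemma Connected.isIndContained_sum (hF : F.Connected) (h : F ⊴ G ⊕g H) : F ⊴ G ∨ F ⊴ H := by
  obtain ⟨f⟩ := h
  obtain ⟨u₀⟩ := hF.nonempty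
  have hside (u) : (f u).isLeft = (f u₀).isLeft :=
    ((hF.preconnected u u₀).map f.toHom).isLeft_eq_of_sum
  cases h₀ : (f u₀).isLeft
  · refine .inr (Embedding.isIndContained_of_forall_isLeft (Iso.sumComm.toEmbedding.comp f) ?_)
    intro u
    simpa [h₀] using hside u
  · exact .inl (Embedding.isIndContained_of_forall_isLeft f fun u => (hside u).trans h₀)

lemma isIndContained_compl_iff (e : F ≃g Fᶜ) : F ⊴ Gᶜ ↔ F ⊴ G := by
  rw [← compl_isIndContained_compl, compl_compl]
  exact ⟨e.isIndContained.trans, e.symm.isIndContained.trans⟩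

lemma IsCompleteMultipartite.not_cycleGraph_five_isIndContained
    (hG : G.IsCompleteMultipartite) : ¬ cycleGraph 5 ⊴ G := by
  rintro ⟨f⟩
  have h02 : ¬ G.Adj (f 0) (f 2) := by rw [f.map_adj_iff]; decide
  have h24 : ¬ G.Adj (f 2) (f 4) := by rw [f.map_adj_iff]; decide
  have h04 : G.Adj (f 0) (f 4) := by rw [f.map_adj_iff]; decide
  exact hG.trans _ _ _ h02 h24 h04

lemma Colorable.not_cycleGraph_five_isIndContained (hG : G.Colorable 2) :
    ¬ cycleGraph 5 ⊴ G := by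
  rintro ⟨f⟩
  have := (hG.of_hom f.toHom).chromaticNumber_le
  rw [chromaticNumber_cycleGraph_of_odd 5 (by norm_num) (by decide)] at this
  norm_num at this

end SimpleGraph

lemma hasInducedC5_iff_isIndContained {V : Type*} (G : SimpleGraph V) :
    HasInducedC5 G ↔ cycleGraph 5 ⊴ G :=
  ⟨fun ⟨f, hf⟩ => ⟨⟨f, hf _ _⟩⟩, fun ⟨f⟩ => ⟨f.toEmbedding, fun _ _ => f.map_adj_iff⟩⟩

def cycleGraphFiveIsoCompl : cycleGraph 5 ≃g (cycleGraph 5)ᶜ where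
  toFun i := 2 * i
  invFun i := 3 * i
  left_inv := by decide
  right_inv := by decide
  map_rel_iff' := by decide

-- Testing `a + b` rather than `b - a` makes adjacency symmetric with no case split on the sides.
def bipartiteCirculant (m d : ℕ) : SimpleGraph (Fin m × Fin 2) where
  Adj u v := ((u.1 + v.1 : Fin m) : ℕ) < d ∧ u.2 ≠ v.2
  symm := ⟨fun u v h => ⟨add_comm u.1 v.1 ▸ h.1, h.2.symm⟩⟩
  loopless := ⟨fun _ h => h.2 rfl⟩

lemma bipartiteCirculant_colorable (m d : ℕ) : (bipartiteCirculant m d).Colorable 2 :=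
  ⟨Coloring.mk Prod.snd fun h => h.2⟩

section deg

variable {V W : Type*}

lemma deg_eq_degree (G : SimpleGraph V) (v : V) [Fintype (G.neighborSet v)] :
    deg G v = G.degree v := by
  rw [deg, Nat.card_eq_fintype_card, card_neighborSet_eq_degree]

lemma deg_compl [Finite V] (G : SimpleGraph V) (v : V) :
    deg Gᶜ v = Nat.card V - 1 - deg G v := by
  have := Fintype.ofFinite V
  classical
  rw [deg_eq_degree, deg_eq_degree, degree_compl, Nat.card_eq_fintype_card]

lemma deg_sum_inl (G : SimpleGraph V) (H : SimpleGraph W) (v : V) :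
    deg (G ⊕g H) (.inl v) = deg G v := by
  rw [deg, deg, neighborSet_sum_inl, Nat.card_image_of_injective Sum.inl_injective]

lemma deg_sum_inr (G : SimpleGraph V) (H : SimpleGraph W) (w : W) :
    deg (G ⊕g H) (.inr w) = deg H w := by
  rw [deg, deg, neighborSet_sum_inr, Nat.card_image_of_injective Sum.inr_injective]

lemma deg_bipartiteCirculant {m d : ℕ} (hdm : d ≤ m) (v : Fin m × Fin 2) :
    deg (bipartiteCirculant m d) v = d := by
  have : NeZero m := ⟨(Fin.pos v.1).ne'⟩
  have e₁ : (bipartiteCirculant m d).neighborSet v ≃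
      {a : Fin m // ((v.1 + a : Fin m) : ℕ) < d} × {t : Fin 2 // v.2 ≠ t} :=
    Equiv.subtypeProdEquivProd (p := fun a => ((v.1 + a : Fin m) : ℕ) < d) (q := (v.2 ≠ ·))
  have e₂ : {a : Fin m // ((v.1 + a : Fin m) : ℕ) < d} ≃ {k : Fin m // (k : ℕ) < d} :=
    (Equiv.addLeft v.1).subtypeEquiv fun _ => Iff.rfl
  have hfst : Nat.card {k : Fin m // (k : ℕ) < d} = d := by
    rw [← Set.coe_ofPred, ← Fin.range_castLE hdm,
      Nat.card_range_of_injective (Fin.castLE_injective hdm), Nat.card_fin]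
  have hsnd : Nat.card {t : Fin 2 // v.2 ≠ t} = 1 := by
    rw [Nat.card_eq_fintype_card]
    generalize v.2 = s
    revert s
    decide
  rw [deg, Nat.card_congr e₁, Nat.card_prod, Nat.card_congr e₂, hfst, hsnd, mul_one]

end deg

def ExistsC5FreeRegular (n d : ℕ) : Prop :=
  ∃ G : SimpleGraph (Fin n), (∀ v, deg G v = d) ∧ ¬ HasInducedC5 G

namespace ExistsC5FreeRegular

variable {n n' m d d' : ℕ}

lemma of_equiv {V : Type*} (e : V ≃ Fin n) (G : SimpleGraph V) (hG : ∀ v, deg G v = d)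
    (hC5 : ¬ cycleGraph 5 ⊴ G) : ExistsC5FreeRegular n d := by
  refine ⟨G.comap e.symm, fun v => ?_, fun h => hC5 ?_⟩
  · rw [← hG (e.symm v)]
    exact Nat.card_congr (e.symm.subtypeEquiv fun _ => Iff.rfl)
  · exact ((hasInducedC5_iff_isIndContained _).1 h).trans (Iso.comap e.symm G).isIndContained

lemma completeEquipartite (r t : ℕ) : ExistsC5FreeRegular (r * t) ((r - 1) * t) := by
  classical
  refine of_equiv finProdFinEquiv _ (fun v => ?_)
    completeEquipartiteGraph.isCompleteMultipartite.not_cycleGraph_five_isIndContained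
  rw [deg_eq_degree, degree_completeEquipartiteGraph]

lemma bipartiteCirculant (hdm : d ≤ m) : ExistsC5FreeRegular (m * 2) d :=
  of_equiv finProdFinEquiv _ (deg_bipartiteCirculant hdm)
    (bipartiteCirculant_colorable m d).not_cycleGraph_five_isIndContained

lemma add (h : ExistsC5FreeRegular n d) (h' : ExistsC5FreeRegular n' d) :
    ExistsC5FreeRegular (n + n') d := by
  obtain ⟨G, hG, hC5⟩ := h
  obtain ⟨G', hG', hC5'⟩ := h'
  refine of_equiv finSumFinEquiv (G ⊕g G') ?_ fun h => ?_
  · rintro (v | v)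
    · rw [deg_sum_inl, hG]
    · rw [deg_sum_inr, hG']
  · rw [hasInducedC5_iff_isIndContained] at hC5 hC5'
    exact (cycleGraph_connected.isIndContained_sum h).elim hC5 hC5'

lemma compl (h : ExistsC5FreeRegular n d) (hn : d + d' + 1 = n) : ExistsC5FreeRegular n d' := by
  obtain ⟨G, hG, hC5⟩ := h
  refine of_equiv (Equiv.refl _) Gᶜ (fun v => ?_) ?_
  · rw [deg_compl, hG, Nat.card_fin]
    omega
  · rwa [isIndContained_compl_iff cycleGraphFiveIsoCompl, ← hasInducedC5_iff_isIndContained]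

end ExistsC5FreeRegular

theorem existsC5FreeRegular_of_even_of_odd {n d : ℕ} (hd : Even d) (hn : Odd n)
    (h : d = 0 ∨ 2 * d + 3 ≤ n) : ExistsC5FreeRegular n d := by
  induction d using Nat.strong_induction_on generalizing n with
  | _ d ih =>
  rw [Nat.even_iff] at hd
  rw [Nat.odd_iff] at hn
  rcases h with rfl | h
  · simpa using ExistsC5FreeRegular.completeEquipartite 1 n
  by_cases hlarge : 3 * d + 1 ≤ n
  · have hK : ExistsC5FreeRegular (d + 1) d := by
      simpa using ExistsC5FreeRegular.completeEquipartite (d + 1) 1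
    convert hK.add (.bipartiteCirculant (m := (n - d - 1) / 2) (by omega)) using 1
    omega
  · have hCP : ExistsC5FreeRegular (d + 2) d := by
      convert ExistsC5FreeRegular.completeEquipartite ((d + 2) / 2) 2 using 1 <;> omega
    have hH : ExistsC5FreeRegular (n - d - 2) (n - 2 * d - 3) :=
      ih _ (by omega) (Nat.even_iff.2 (by omega)) (Nat.odd_iff.2 (by omega)) (.inr (by omega))
    convert hCP.add (hH.compl (by omega)) using 1
    omega

/-- For every odd `n` and every even `d` with `0 ≤ d ≤ n−1` and `d ≠ (n−1)/2`,
there is a `d`-regular graph on `n` vertices with no induced 5-cycle. -/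
theorem stmt_11 (n d : ℕ) (hn : Odd n) (hd : Even d) (hdn : d ≤ n - 1)
    (hne : d ≠ (n - 1) / 2) :
    ∃ G : SimpleGraph (Fin n), (∀ v, deg G v = d) ∧ ¬ HasInducedC5 G := by
  rcases le_or_gt (2 * d + 3) n with h | h
  · exact existsC5FreeRegular_of_even_of_odd hd hn (.inr h)
  · have hn' := Nat.odd_iff.1 hn
    have hd' := Nat.even_iff.1 hd
    exact (existsC5FreeRegular_of_even_of_odd (d := n - 1 - d) (Nat.even_iff.2 (by omega)) hn
      (.inr (by omega))).compl (by omega)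
end

section
/- For every m ≡ 0 (mod 4), there exists an m-regular graph on 2m+1 vertices that contains no induced 5-cycle. -/
namespace SimpleGraph

variable {V W : Type*}

theorem hasInducedC5_iff (G : SimpleGraph V) : HasInducedC5 G ↔ Nonempty (cycleGraph 5 ↪g G) :=
  ⟨fun ⟨f, hf⟩ => ⟨⟨f, hf _ _⟩⟩, fun ⟨f⟩ => ⟨f.toEmbedding, fun _ _ => f.map_rel_iff⟩⟩

theorem Iso.hasInducedC5_iff {G : SimpleGraph V} {G' : SimpleGraph W} (e : G ≃g G') :
    HasInducedC5 G ↔ HasInducedC5 G' := by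
  simp only [SimpleGraph.hasInducedC5_iff]
  exact ⟨fun ⟨f⟩ => ⟨e.toEmbedding.comp f⟩, fun ⟨f⟩ => ⟨e.symm.toEmbedding.comp f⟩⟩

theorem Iso.deg_eq {G : SimpleGraph V} {G' : SimpleGraph W} (e : G ≃g G') (v : V) :
    deg G v = deg G' (e v) :=
  Nat.card_congr (e.mapNeighborSet v)

theorem deg_eq_degree (G : SimpleGraph V) (v : V) [Fintype (G.neighborSet v)] :
    deg G v = G.degree v := by
  rw [deg, Nat.card_eq_fintype_card, card_neighborSet_eq_degree]

theorem cycleGraph_five_exists_distinguishing (i j : Fin 5) (hij : i ≠ j) :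
    ∃ k, k ≠ i ∧ k ≠ j ∧ ¬ ((cycleGraph 5).Adj k i ↔ (cycleGraph 5).Adj k j) := by
  revert i j; decide

section Rook

variable {α β : Type*}

theorem boxProd_top_fst_eq_iff {x y z : α × β} (hxy : ((⊤ : SimpleGraph α) □ ⊤).Adj x y)
    (hyz : ((⊤ : SimpleGraph α) □ ⊤).Adj y z) (hxz : ¬ ((⊤ : SimpleGraph α) □ ⊤).Adj x z)
    (hne : x ≠ z) : x.1 = y.1 ↔ y.1 ≠ z.1 := by
  simp only [boxProd_adj, top_adj, ne_eq, Prod.ext_iff] at *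
  grind

theorem not_hasInducedC5_boxProd_top :
    ¬ HasInducedC5 ((⊤ : SimpleGraph α) □ (⊤ : SimpleGraph β)) := by
  rintro ⟨f, hf⟩
  set t : Fin 5 → Prop := fun i => (f i).1 = (f (i + 1)).1
  have ht (i : Fin 5) : t (i + 1) ↔ ¬ t i := by
    have hnadj : ¬ (cycleGraph 5).Adj i (i + 1 + 1) := by revert i; decide
    have := boxProd_top_fst_eq_iff ((hf i (i + 1)).2 (by revert i; decide))
      ((hf (i + 1) (i + 1 + 1)).2 (by revert i; decide)) (mt (hf _ _).1 hnadj)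
      (f.injective.ne (by revert i; decide))
    tauto
  have h0 : t 1 ↔ ¬ t 0 := ht 0
  have h1 : t 2 ↔ ¬ t 1 := ht 1
  have h2 : t 3 ↔ ¬ t 2 := ht 2
  have h3 : t 4 ↔ ¬ t 3 := ht 3
  have h4 : t 0 ↔ ¬ t 4 := ht 4
  tauto

end Rook

section Blowup

variable {β : Type*} (H : SimpleGraph β) (C : Set β) (block : β → Type*)

def blowup : SimpleGraph (Σ b, block b) where
  Adj x y := x ≠ y ∧ (H.Adj x.1 y.1 ∨ x.1 = y.1 ∧ x.1 ∈ C)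
  symm := ⟨by
    rintro x y ⟨hne, hadj | ⟨heq, hC⟩⟩
    · exact ⟨hne.symm, .inl hadj.symm⟩
    · exact ⟨hne.symm, .inr ⟨heq.symm, heq ▸ hC⟩⟩⟩
  loopless := ⟨fun _ h => h.1 rfl⟩

variable {H C block}

theorem blowup_adj_mk_of_ne {b c : β} {x : block b} {y : block c} (h : b ≠ c) :
    (blowup H C block).Adj ⟨b, x⟩ ⟨c, y⟩ ↔ H.Adj b c := by
  simp [blowup, h]

theorem blowup_adj_iff_of_fst_eq {x y z : Σ b, block b} (hxy : x.1 = y.1) (hzx : z ≠ x)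
    (hzy : z ≠ y) : (blowup H C block).Adj z x ↔ (blowup H C block).Adj z y := by
  simp only [blowup, ne_eq, hzx, hzy, not_false_eq_true, true_and, hxy]

theorem blowup_adj_fst_eq_iff {b : β} {x y : block b} :
    (blowup H C block).Adj ⟨b, x⟩ ⟨b, y⟩ ↔ x ≠ y ∧ b ∈ C := by
  simp [blowup]

theorem nonempty_embedding_of_embedding_blowup {α : Type*} {F : SimpleGraph α}
    (hF : ∀ i j, i ≠ j → ∃ k, k ≠ i ∧ k ≠ j ∧ ¬ (F.Adj k i ↔ F.Adj k j))
    (f : F ↪g blowup H C block) : Nonempty (F ↪g H) := by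
  have hinj : Function.Injective fun i => (f i).1 := by
    intro i j hij
    by_contra hne
    obtain ⟨k, hki, hkj, hk⟩ := hF i j hne
    rw [← f.map_rel_iff, ← f.map_rel_iff] at hk
    exact hk (blowup_adj_iff_of_fst_eq hij (f.injective.ne hki) (f.injective.ne hkj))
  refine ⟨⟨⟨_, hinj⟩, fun {i j} => ?_⟩⟩
  rcases eq_or_ne i j with rfl | hij
  · simp
  · rw [← f.map_rel_iff]
    exact (blowup_adj_mk_of_ne (hinj.ne hij)).symm

theorem not_hasInducedC5_blowup (hH : ¬ HasInducedC5 H) : ¬ HasInducedC5 (blowup H C block) := by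
  rw [hasInducedC5_iff] at hH ⊢
  rintro ⟨f⟩
  exact hH (nonempty_embedding_of_embedding_blowup cycleGraph_five_exists_distinguishing f)

theorem deg_blowup [Fintype β] [DecidableRel H.Adj] [DecidablePred (· ∈ C)]
    [∀ b, Fintype (block b)] (b : β) (x : block b) :
    deg (blowup H C block) ⟨b, x⟩ =
      (∑ c, if H.Adj b c then Fintype.card (block c) else 0) +
        if b ∈ C then Fintype.card (block b) - 1 else 0 := by
  classical
  have hblock (c : β) : (∑ y : block c,
      if (blowup H C block).Adj ⟨b, x⟩ ⟨c, y⟩ then 1 else 0) =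
        (if H.Adj b c then Fintype.card (block c) else 0) +
          if b = c then (if b ∈ C then Fintype.card (block b) - 1 else 0) else 0 := by
    rcases eq_or_ne b c with rfl | hbc
    · simp_rw [blowup_adj_fst_eq_iff, H.loopless.irrefl b]
      by_cases hC : b ∈ C
      · simp only [hC, and_true, if_true, Finset.sum_boole, Finset.filter_ne,
          Finset.card_erase_of_mem (Finset.mem_univ x), Finset.card_univ, Nat.cast_id, if_false,
          zero_add]
      · simp [hC]
    · simp_rw [blowup_adj_mk_of_ne hbc]
      split_ifs <;> simp
  rw [deg_eq_degree, ← card_neighborFinset_eq_degree, neighborFinset_eq_filter, Finset.card_filter,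
    Fintype.sum_sigma, Finset.sum_congr rfl fun c _ => hblock c, Finset.sum_add_distrib,
    Finset.sum_ite_eq]
  simp

end Blowup

end SimpleGraph

open SimpleGraph

def rookBlockSize (r : ℕ) (p : Fin 3 × Fin 3) : ℕ := if p = 0 then 1 else r

def rookBlowup (r : ℕ) : SimpleGraph (Σ p : Fin 3 × Fin 3, Fin (rookBlockSize r p)) :=
  blowup ((⊤ : SimpleGraph (Fin 3)) □ ⊤) {p | p.1 = 0 ∨ p.2 = 0} fun p => Fin (rookBlockSize r p)

theorem card_rookBlowup (r : ℕ) :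
    Fintype.card (Σ p : Fin 3 × Fin 3, Fin (rookBlockSize r p)) = 8 * r + 1 := by
  simp only [Fintype.card_sigma, Fintype.card_fin]
  simp [Fintype.sum_prod_type, Fin.sum_univ_three, rookBlockSize]
  ring

theorem deg_rookBlowup (r : ℕ) (v : Σ p : Fin 3 × Fin 3, Fin (rookBlockSize r p)) :
    deg (rookBlowup r) v = 4 * r := by
  classical
  obtain ⟨p, x⟩ := v
  have hpos := x.pos
  rw [rookBlowup, deg_blowup]
  simp only [Fintype.card_fin]
  fin_cases p <;> simp [Fintype.sum_prod_type, Fin.sum_univ_three, rookBlockSize] at hpos ⊢ <;> omega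

/-- For every `m ≡ 0 (mod 4)`, there is an `m`-regular graph on `2m+1` vertices
with no induced 5-cycle. -/
theorem stmt_12 (m : ℕ) (hm : m % 4 = 0) :
    ∃ G : SimpleGraph (Fin (2 * m + 1)), (∀ v, deg G v = m) ∧ ¬ HasInducedC5 G := by
  obtain ⟨r, rfl⟩ : ∃ r, m = 4 * r := ⟨m / 4, by omega⟩
  obtain ⟨e⟩ : Nonempty (Fin (2 * (4 * r) + 1) ≃ Σ p : Fin 3 × Fin 3, Fin (rookBlockSize r p)) :=
    Fintype.card_eq.1 (by rw [card_rookBlowup, Fintype.card_fin]; ring)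
  let iso := Iso.comap e (rookBlowup r)
  refine ⟨(rookBlowup r).comap e, fun v => ?_, ?_⟩
  · rw [iso.deg_eq, deg_rookBlowup]
  · rw [iso.hasInducedC5_iff]
    exact not_hasInducedC5_blowup not_hasInducedC5_boxProd_top
end

section
/- For every m ≡ 2 (mod 6) with m = 6r − 2 and r ≥ 2, the 3×3 grid graph with first row consisting of three empty graphs on 2r−1 vertices and remaining six blocks being (r−1)-regular graphs on r vertices (each block with no induced 5-cycle) is an m-regular graph on 2m+1 = 12r−3 vertices with no induced 5-cycle. -/
/-- The 3×3 grid graph: vertices are placed at positions `p v` in a 3×3 grid;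
`H` is the disjoint union of the nine blocks (its edges stay within blocks),
and additionally any two vertices in distinct blocks sharing a row or a column
are joined. -/
def gridOf {V : Type*} (H : SimpleGraph V) (p : V → Fin 3 × Fin 3) :
    SimpleGraph V where
  Adj u v := H.Adj u v ∨ (p u ≠ p v ∧ ((p u).1 = (p v).1 ∨ (p u).2 = (p v).2))
  symm := by
    constructor
    intro u v h
    rcases h with h | ⟨hne, hrc⟩
    · exact Or.inl h.symm
    · exact Or.inr ⟨hne.symm, hrc.imp Eq.symm Eq.symm⟩
  loopless := by
    constructor
    intro v h
    rcases h with h | ⟨hne, _⟩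
    · exact H.irrefl h
    · exact hne rfl

/-!
Each block of `gridOf H p` is a module: a vertex outside the block is adjacent to all of it or
to none of it. The 5-cycle has no module other than singletons and the whole vertex set, so an
induced 5-cycle either lies in a single block, where it is an induced 5-cycle of `H`, or meets
every block at most once, where it is an induced 5-cycle of the rook's graph `K₃ □ K₃`. The rook's
graph has none: two consecutive edges of an induced cycle cannot both run along a row or both
along a column, as that would give a chord, so row and column edges alternate, which is
impossible around a cycle of odd length.

The degree of a vertex is its degree in its block plus the sizes of the four blocks that share
its row or column.
-/

namespace SimpleGraph

def rookGraph (α β : Type*) : SimpleGraph (α × β) := (⊤ : SimpleGraph α) □ (⊤ : SimpleGraph β)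

theorem rookGraph_adj {α β : Type*} {x y : α × β} :
    (rookGraph α β).Adj x y ↔ x ≠ y ∧ (x.1 = y.1 ∨ x.2 = y.2) := by
  rw [rookGraph, boxProd_adj, top_adj, top_adj, Ne, Ne, Ne, Prod.ext_iff]
  tauto

instance {α β : Type*} [DecidableEq α] [DecidableEq β] : DecidableRel (rookGraph α β).Adj :=
  fun _ _ => decidable_of_iff' _ rookGraph_adj

theorem rookGraph_not_hasInducedC5 (α β : Type*) : ¬ HasInducedC5 (rookGraph α β) := by
  rintro ⟨f, hf⟩
  have alternate : ∀ i j k : Fin 5, (cycleGraph 5).Adj i j → (cycleGraph 5).Adj j k →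
      ¬ (cycleGraph 5).Adj i k → i ≠ k → ((f i).1 = (f j).1 ↔ (f j).1 ≠ (f k).1) := by
    intro i j k hij hjk hik hne
    rw [← hf, rookGraph_adj] at hij hjk hik
    have := f.injective.ne hne
    grind
  have := alternate 0 1 2 (by decide) (by decide) (by decide) (by decide)
  have := alternate 1 2 3 (by decide) (by decide) (by decide) (by decide)
  have := alternate 2 3 4 (by decide) (by decide) (by decide) (by decide)
  have := alternate 3 4 0 (by decide) (by decide) (by decide) (by decide)
  have := alternate 4 0 1 (by decide) (by decide) (by decide) (by decide)
  tauto

def IsModule {V : Type*} (G : SimpleGraph V) (S : Set V) : Prop :=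
  ∀ u ∈ S, ∀ u' ∈ S, ∀ w ∉ S, G.Adj u w ↔ G.Adj u' w

theorem cycleGraph_five_eq_univ_of_isModule {S : Set (Fin 5)} (hS : (cycleGraph 5).IsModule S)
    {i i' : Fin 5} (hi : i ∈ S) (hi' : i' ∈ S) (hne : i ≠ i') : S = Set.univ := by
  lift S to Finset (Fin 5) using S.toFinite
  simp only [IsModule, Finset.mem_coe, Finset.coe_eq_univ] at *
  revert S i i'
  decide

theorem sum_rookGraph_adj (w : Fin 3 → ℕ) (x : Fin 3 × Fin 3) :
    ∑ q with (rookGraph (Fin 3) (Fin 3)).Adj x q, w q.1 = ∑ a, w a + w x.1 := by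
  obtain ⟨a, b⟩ := x
  fin_cases a <;> fin_cases b <;>
    simp [Finset.sum_filter, Fintype.sum_prod_type, Fin.sum_univ_three, rookGraph_adj] <;> omega

end SimpleGraph

open SimpleGraph

section gridOf

variable {V : Type*} {H : SimpleGraph V} {p : V → Fin 3 × Fin 3}

theorem gridOf_adj {u v : V} :
    (gridOf H p).Adj u v ↔ H.Adj u v ∨ (rookGraph (Fin 3) (Fin 3)).Adj (p u) (p v) := by
  rw [rookGraph_adj]
  rfl

theorem gridOf_adj_of_eq {u v : V} (h : p u = p v) : (gridOf H p).Adj u v ↔ H.Adj u v := by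
  rw [gridOf_adj, h, or_iff_left ((rookGraph _ _).irrefl)]

theorem gridOf_adj_of_ne (hblock : ∀ u v, H.Adj u v → p u = p v) {u v : V} (h : p u ≠ p v) :
    (gridOf H p).Adj u v ↔ (rookGraph (Fin 3) (Fin 3)).Adj (p u) (p v) := by
  rw [gridOf_adj, or_iff_right (mt (hblock u v) h)]

theorem deg_gridOf [Fintype V] (hblock : ∀ u v, H.Adj u v → p u = p v) (v : V) :
    deg (gridOf H p) v =
      deg H v + ∑ q with (rookGraph (Fin 3) (Fin 3)).Adj (p v) q, Nat.card {u // p u = q} := by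
  classical
  set N : Finset (Fin 3 × Fin 3) := {q | (rookGraph (Fin 3) (Fin 3)).Adj (p v) q}
  have hsplit : (gridOf H p).neighborSet v = H.neighborSet v ∪ p ⁻¹' N := by
    ext u
    simp [N, gridOf_adj]
  have hdisj : Disjoint (H.neighborSet v) (p ⁻¹' N) := by
    refine Set.disjoint_left.2 fun u hu hu' => ?_
    simp only [N, Set.mem_preimage, Finset.coe_filter, Finset.mem_univ, true_and,
      Set.mem_ofPred_eq, hblock v u hu] at hu'
    exact (rookGraph _ _).irrefl hu'
  rw [deg, deg, hsplit, Nat.card_coe_set_eq, Set.ncard_union_eq hdisj, ← Nat.card_coe_set_eq,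
    ← Nat.card_coe_set_eq, Finset.card_preimage_eq_sum_card_image_eq fun _ _ => Set.toFinite _]

theorem not_hasInducedC5_gridOf (hblock : ∀ u v, H.Adj u v → p u = p v)
    (hH : ¬ HasInducedC5 H) : ¬ HasInducedC5 (gridOf H p) := by
  rintro ⟨f, hf⟩
  by_cases hinj : Function.Injective (p ∘ f)
  · refine rookGraph_not_hasInducedC5 (Fin 3) (Fin 3) ⟨⟨p ∘ f, hinj⟩, fun i j => ?_⟩
    rcases eq_or_ne i j with rfl | hij
    · simp only [SimpleGraph.irrefl]
    · rw [← hf, gridOf_adj_of_ne hblock (hinj.ne hij)]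
      rfl
  obtain ⟨i, i', hii', hne⟩ : ∃ i i', p (f i) = p (f i') ∧ i ≠ i' := by
    simpa [Function.Injective] using hinj
  have hmodule : (cycleGraph 5).IsModule {j | p (f j) = p (f i)} := by
    intro j (hj : p (f j) = _) j' (hj' : p (f j') = _) k (hk : p (f k) ≠ _)
    rw [← hf, ← hf, gridOf_adj_of_ne hblock (hj ▸ hk.symm),
      gridOf_adj_of_ne hblock (hj' ▸ hk.symm), hj, hj']
  have hsameBlock := Set.eq_univ_iff_forall.1
    (cycleGraph_five_eq_univ_of_isModule hmodule rfl hii'.symm hne)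
  refine hH ⟨f, fun j k => ?_⟩
  rw [← hf, gridOf_adj_of_eq ((hsameBlock j).trans (hsameBlock k).symm)]

end gridOf

theorem stmt_15_general {V : Type*} [Fintype V] (r : ℕ)
    (H : SimpleGraph V) (p : V → Fin 3 × Fin 3)
    (hblock : ∀ u v, H.Adj u v → p u = p v)
    (hsize : ∀ q : Fin 3 × Fin 3,
      Nat.card {v : V // p v = q} = if q.1 = 0 then 2 * r - 1 else r)
    (hdeg : ∀ v, deg H v = if (p v).1 = 0 then 0 else r - 1)
    (hH : ¬ HasInducedC5 H) :
    (∀ v, deg (gridOf H p) v = 6 * r - 2) ∧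
    Fintype.card V = 12 * r - 3 ∧
    ¬ HasInducedC5 (gridOf H p) := by
  set w : Fin 3 → ℕ := fun a => if a = 0 then 2 * r - 1 else r with hw
  have hsize' (q : Fin 3 × Fin 3) : Nat.card {v : V // p v = q} = w q.1 := hsize q
  have hsum : ∑ a, w a = 4 * r - 1 := by
    simp only [hw, Fin.sum_univ_three, Fin.isValue, ↓reduceIte, Fin.reduceEq]
    omega
  refine ⟨fun v => ?_, ?_, not_hasInducedC5_gridOf hblock hH⟩
  · rw [deg_gridOf hblock, hdeg]
    simp only [hsize']
    rw [sum_rookGraph_adj, hsum]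
    simp only [hw]
    split_ifs <;> omega
  · rw [← Nat.card_eq_fintype_card, ← Nat.card_congr (Equiv.sigmaFiberEquiv p), Nat.card_sigma]
    simp only [hsize', Fintype.sum_prod_type, Finset.sum_const, Finset.card_univ, Fintype.card_fin]
    rw [← Finset.smul_sum, hsum, smul_eq_mul]
    omega

/-- For `m = 6r−2` with `r ≥ 2`, the 3×3 grid graph whose first row consists of
empty blocks on `2r−1` vertices and whose other six blocks are `(r−1)`-regular
graphs on `r` vertices, with no block containing an induced 5-cycle, is an
`m`-regular graph on `2m+1 = 12r−3` vertices with no induced 5-cycle. -/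
theorem stmt_15 {V : Type*} [Fintype V] (r : ℕ) (hr : 2 ≤ r)
    (H : SimpleGraph V) (p : V → Fin 3 × Fin 3)
    (hblock : ∀ u v, H.Adj u v → p u = p v)
    (hsize : ∀ q : Fin 3 × Fin 3,
      Nat.card {v : V // p v = q} = if q.1 = 0 then 2 * r - 1 else r)
    (hdeg : ∀ v, deg H v = if (p v).1 = 0 then 0 else r - 1)
    (hH : ¬ HasInducedC5 H) :
    (∀ v, deg (gridOf H p) v = 6 * r - 2) ∧
    Fintype.card V = 12 * r - 3 ∧
    ¬ HasInducedC5 (gridOf H p) :=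
  stmt_15_general r H p hblock hsize hdeg hH
end
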